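/- arXiv:2112.15134 — 2 statements merged into one kernel-verified Lean document; each statement's English description precedes it below -/
import Mathlib

section
/- Let h be a positive integer and let a, b be integers with 1 ≤ a ≤ h−1 and 1 ≤ b ≤ h−1, and let T = conv{(0,0), (a,h), (h,b)}, so that ls_□(T) = h. Then T is minimal (i.e., every lattice polygon properly contained in T has ls_□ strictly less than h) if and only if a + b ≥ h. -/
open Set MeasureTheory Pointwise

/-- A plane convex body: a compact convex subset of ℝ² with nonempty interior. -/
def IsPlaneConvexBody (P : Set (Fin 2 → ℝ)) : Prop :=
  IsCompact P ∧ Convex ℝ P ∧ (interior P).Nonempty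

/-- The width of `P` in the direction `u`. -/
noncomputable def width (P : Set (Fin 2 → ℝ)) (u : Fin 2 → ℝ) : ℝ :=
  sSup ((fun p => u 0 * p 0 + u 1 * p 1) '' P) -
    sInf ((fun p => u 0 * p 0 + u 1 * p 1) '' P)

/-- An affine unimodular transformation: multiplication by an integer matrix with
determinant `±1` followed by a translation by an integer vector. -/
def IsUnimodularMap (φ : (Fin 2 → ℝ) → (Fin 2 → ℝ)) : Prop :=
  ∃ (A : Matrix (Fin 2) (Fin 2) ℤ) (t : Fin 2 → ℤ),
    (A.det = 1 ∨ A.det = -1) ∧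
    ∀ x, φ x = (A.map (Int.cast : ℤ → ℝ)).mulVec x + fun i => (t i : ℝ)

/-- Two subsets of ℝ² are lattice-equivalent if one is the image of the other
under an affine unimodular transformation. -/
def LatticeEquivalent (P Q : Set (Fin 2 → ℝ)) : Prop :=
  ∃ φ, IsUnimodularMap φ ∧ Q = φ '' P

/-- The `l`-dilate of the unit square, `[0,l]²`. -/
def squareDilate (l : ℝ) : Set (Fin 2 → ℝ) :=
  {x | ∀ i, x i ∈ Set.Icc 0 l}

/-- The `l`-dilate of the standard 2-simplex. -/
def simplexDilate (l : ℝ) : Set (Fin 2 → ℝ) :=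
  {x | 0 ≤ x 0 ∧ 0 ≤ x 1 ∧ x 0 + x 1 ≤ l}

/-- The lattice size of `P` with respect to the unit square. -/
noncomputable def lsSquare (P : Set (Fin 2 → ℝ)) : ℝ :=
  sInf {l : ℝ | 0 ≤ l ∧ ∃ φ, IsUnimodularMap φ ∧ φ '' P ⊆ squareDilate l}

/-- The lattice size of `P` with respect to the standard simplex. -/
noncomputable def lsDelta (P : Set (Fin 2 → ℝ)) : ℝ :=
  sInf {l : ℝ | 0 ≤ l ∧ ∃ φ, IsUnimodularMap φ ∧ φ '' P ⊆ simplexDilate l}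

/-- The lattice width of `P`: the minimum of `width P u` over primitive integer
directions `u`. -/
noncomputable def latticeWidth (P : Set (Fin 2 → ℝ)) : ℝ :=
  sInf {w : ℝ | ∃ u : Fin 2 → ℤ, Int.gcd (u 0) (u 1) = 1 ∧
    w = width P (fun i => (u i : ℝ))}

/-- A lattice polygon: the convex hull of a (nonempty) finite set of points of ℤ². -/
def IsLatticePolygon (P : Set (Fin 2 → ℝ)) : Prop :=
  ∃ S : Finset (Fin 2 → ℤ), S.Nonempty ∧
    P = convexHull ℝ ((fun p : Fin 2 → ℤ => fun i => (p i : ℝ)) '' (S : Set (Fin 2 → ℤ)))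

/-- The area of a plane set: its two-dimensional Lebesgue measure. -/
noncomputable def area (P : Set (Fin 2 → ℝ)) : ℝ :=
  (volume P).toReal

/-! If `a + b ≥ h`, a proper lattice subpolygon `P` of `T` misses a vertex of `T`, and all
lattice points of `T` other than that vertex fit into `[0, h-1]²` after a translation (for the
vertex `0`) or a shear (for the vertices `(a, h)` and `(h, b)`). If `a + b < h`, the lattice
triangle `conv{(0,0), (h,b), (a,h-1)} ⊂ T` still has lattice size `h`: a unimodular map putting
it into `[0, h-1]²` would have integer rows `(p, q)` with `|p h + q b| ≤ h - 1` and
`|p (h-a) + q (b-h+1)| ≤ h - 1`, which forces `p = 0` in both rows, i.e. a singular matrix. -/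

open Matrix

def latticeHull (S : Set (Fin 2 → ℤ)) : Set (Fin 2 → ℝ) :=
  convexHull ℝ ((fun p : Fin 2 → ℤ => fun i => (p i : ℝ)) '' S)

def triangle (h a b : ℤ) : Set (Fin 2 → ℝ) :=
  convexHull ℝ {![0, 0], ![(a : ℝ), (h : ℝ)], ![(h : ℝ), (b : ℝ)]}

lemma convex_squareDilate (l : ℝ) : Convex ℝ (squareDilate l) := by
  have : squareDilate l = Set.univ.pi fun _ => Icc 0 l := by
    ext; simp only [squareDilate, Set.mem_ofPred_eq, Set.mem_univ_pi]
  exact this ▸ convex_pi fun _ _ => convex_Icc 0 l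

lemma convexHull_subset_halfPlane {X : Set (Fin 2 → ℝ)} {c₀ c₁ r : ℝ}
    (hX : ∀ x ∈ X, c₀ * x 0 + c₁ * x 1 ≤ r) :
    convexHull ℝ X ⊆ {x | c₀ * x 0 + c₁ * x 1 ≤ r} :=
  convexHull_min hX <| convex_halfSpace_le
    ⟨fun x y => by simp only [Pi.add_apply]; ring,
      fun c x => by simp only [Pi.smul_apply, smul_eq_mul]; ring⟩ r

lemma intCast_vecCons_two (x y : ℤ) :
    (fun i => ((![x, y] : Fin 2 → ℤ) i : ℝ)) = ![(x : ℝ), (y : ℝ)] := by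
  funext i; fin_cases i <;> simp

lemma intAffine_apply_intCast (A : Matrix (Fin 2) (Fin 2) ℤ) (t s : Fin 2 → ℤ) :
    A.map (Int.cast : ℤ → ℝ) *ᵥ (fun i => (s i : ℝ)) + (fun i => (t i : ℝ)) =
      fun i => ((A *ᵥ s + t) i : ℝ) := by
  funext i
  simp only [Pi.add_apply, Int.cast_add]
  exact congrArg (· + _) (RingHom.map_mulVec (Int.castRingHom ℝ) A s i).symm

lemma intAffine_image_latticeHull_subset {S : Set (Fin 2 → ℤ)} {l : ℤ}
    (A : Matrix (Fin 2) (Fin 2) ℤ) (t : Fin 2 → ℤ)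
    (hS : ∀ s ∈ S, ∀ i, (A *ᵥ s + t) i ∈ Icc 0 l) :
    (fun x => A.map (Int.cast : ℤ → ℝ) *ᵥ x + fun i => (t i : ℝ)) '' latticeHull S ⊆
      squareDilate l := by
  let f : (Fin 2 → ℝ) →ᵃ[ℝ] (Fin 2 → ℝ) :=
    (mulVecLin (A.map (Int.cast : ℤ → ℝ))).toAffineMap +
      AffineMap.const ℝ _ fun i => (t i : ℝ)
  change f '' _ ⊆ _
  rw [latticeHull, f.image_convexHull]
  refine convexHull_min ?_ (convex_squareDilate l)
  rintro _ ⟨_, ⟨s, hs, rfl⟩, rfl⟩ i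
  change (A.map (Int.cast : ℤ → ℝ) *ᵥ (fun i => (s i : ℝ)) + fun i => (t i : ℝ)) i ∈ _
  rw [intAffine_apply_intCast]
  exact ⟨Int.cast_nonneg_iff.mpr (hS s hs i).1, Int.cast_le.mpr (hS s hs i).2⟩

def FitsInSquare (S : Set (Fin 2 → ℤ)) (l : ℤ) : Prop :=
  ∃ (A : Matrix (Fin 2) (Fin 2) ℤ) (t : Fin 2 → ℤ), (A.det = 1 ∨ A.det = -1) ∧
    ∀ s ∈ S, ∀ i, (A *ᵥ s + t) i ∈ Icc 0 l

lemma lsSquare_latticeHull_le {S : Set (Fin 2 → ℤ)} {l : ℤ} (hl : 0 ≤ l)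
    (hS : FitsInSquare S l) : lsSquare (latticeHull S) ≤ l := by
  obtain ⟨A, t, hA, hAt⟩ := hS
  exact csInf_le ⟨0, fun _ hm => hm.1⟩
    ⟨by exact_mod_cast hl, _, ⟨A, t, hA, fun _ => rfl⟩, intAffine_image_latticeHull_subset A t hAt⟩

lemma le_lsSquare_latticeHull {S : Set (Fin 2 → ℤ)} {h : ℤ} (hh : 0 ≤ h)
    (hS : FitsInSquare S h) (hS' : ¬FitsInSquare S (h - 1)) :
    (h : ℝ) ≤ lsSquare (latticeHull S) := by
  obtain ⟨A₀, t₀, hA₀, hAt₀⟩ := hS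
  refine le_csInf ⟨h, by exact_mod_cast hh, _, ⟨A₀, t₀, hA₀, fun _ => rfl⟩,
    intAffine_image_latticeHull_subset A₀ t₀ hAt₀⟩ ?_
  rintro l ⟨-, φ, ⟨A, t, hA, hφ⟩, hφS⟩
  obtain rfl : φ = _ := funext hφ
  by_contra! hl
  refine hS' ⟨A, t, hA, fun s hs i => ?_⟩
  have hmem : ((A *ᵥ s + t) i : ℝ) ∈ Icc 0 l := by
    simpa only [intAffine_apply_intCast] using hφS ⟨_, subset_convexHull ℝ _ ⟨s, hs, rfl⟩, rfl⟩ i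
  have hlt : (A *ᵥ s + t) i < h := by exact_mod_cast hmem.2.trans_lt hl
  exact ⟨by exact_mod_cast hmem.1, by omega⟩

section Triangle

variable {h a b : ℤ}

def InTriangle (h a b x y : ℤ) : Prop :=
  a * y ≤ h * x ∧ b * x ≤ h * y ∧ (h - b) * x + (h - a) * y ≤ h ^ 2 - a * b

lemma inTriangle_comm {x y : ℤ} : InTriangle h a b x y ↔ InTriangle h b a y x := by
  unfold InTriangle
  constructor <;> rintro ⟨h1, h2, h3⟩ <;> exact ⟨h2, h1, by linarith⟩

lemma InTriangle.mem_Icc (ha1 : 1 ≤ a) (ha2 : a ≤ h - 1) (hb1 : 1 ≤ b) (hb2 : b ≤ h - 1)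
    {x y : ℤ} (hxy : InTriangle h a b x y) : x ∈ Icc 0 h ∧ y ∈ Icc 0 h := by
  obtain ⟨h1, h2, h3⟩ := hxy
  have hD : 0 < h ^ 2 - a * b := by nlinarith
  exact ⟨⟨by nlinarith, by nlinarith⟩, by nlinarith, by nlinarith⟩

lemma InTriangle.pos_of_ne_origin (ha1 : 1 ≤ a) (ha2 : a ≤ h - 1) (hb1 : 1 ≤ b)
    (hb2 : b ≤ h - 1) {x y : ℤ} (hxy : InTriangle h a b x y) (hv : ¬(x = 0 ∧ y = 0)) :
    x - 1 ∈ Icc 0 (h - 1) ∧ y - 1 ∈ Icc 0 (h - 1) := by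
  obtain ⟨⟨hx0, hxh⟩, hy0, hyh⟩ := hxy.mem_Icc ha1 ha2 hb1 hb2
  obtain ⟨h1, h2, -⟩ := hxy
  have : x ≠ 0 := fun hx => hv ⟨hx, by subst hx; nlinarith⟩
  have : y ≠ 0 := fun hy => hv ⟨by subst hy; nlinarith, hy⟩
  exact ⟨⟨by omega, by omega⟩, by omega, by omega⟩

lemma InTriangle.shear_mem_of_ne (ha1 : 1 ≤ a) (ha2 : a ≤ h - 1) (hb1 : 1 ≤ b)
    (hb2 : b ≤ h - 1) (hab : h ≤ a + b) {x y : ℤ} (hxy : InTriangle h a b x y)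
    (hv : ¬(x = a ∧ y = h)) :
    x - y + (h - a - 1) ∈ Icc 0 (h - 1) ∧ y ∈ Icc 0 (h - 1) := by
  obtain ⟨⟨hx0, hxh⟩, hy0, hyh⟩ := hxy.mem_Icc ha1 ha2 hb1 hb2
  obtain ⟨h1, h2, h3⟩ := hxy
  have hy : y ≠ h := fun hy => hv ⟨by subst hy; nlinarith, hy⟩
  have hxy_le : x - y ≤ h - b := by nlinarith
  have hxy_ge : a - h < x - y := by
    by_contra! hc
    exact hy (by nlinarith)
  exact ⟨⟨by omega, by omega⟩, by omega, by omega⟩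

lemma fitsInSquare_of_forall_ne_vertex (ha1 : 1 ≤ a) (ha2 : a ≤ h - 1) (hb1 : 1 ≤ b)
    (hb2 : b ≤ h - 1) (hab : h ≤ a + b) {S : Set (Fin 2 → ℤ)}
    (hS : ∀ s ∈ S, InTriangle h a b (s 0) (s 1)) {v : Fin 2 → ℤ}
    (hv : v = ![0, 0] ∨ v = ![a, h] ∨ v = ![h, b]) (hSv : ∀ s ∈ S, s ≠ v) :
    FitsInSquare S (h - 1) := by
  have vec_ne {s : Fin 2 → ℤ} {x y : ℤ} (hs : s ≠ ![x, y]) : ¬(s 0 = x ∧ s 1 = y) := by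
    rintro ⟨hx, hy⟩
    exact hs (funext fun i => by fin_cases i <;> simp [hx, hy])
  rcases hv with rfl | rfl | rfl
  · refine ⟨1, ![-1, -1], Or.inl det_one, fun s hs => ?_⟩
    have hmap : 1 *ᵥ s + ![-1, -1] = ![s 0 - 1, s 1 - 1] := by
      ext i; fin_cases i <;> simp [sub_eq_add_neg]
    rw [hmap, Fin.forall_fin_two]
    simpa using (hS s hs).pos_of_ne_origin ha1 ha2 hb1 hb2 (vec_ne (hSv s hs))
  · refine ⟨!![1, -1; 0, 1], ![h - a - 1, 0], Or.inl (by simp [det_fin_two]),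
      fun s hs => ?_⟩
    have hmap : !![1, -1; 0, 1] *ᵥ s + ![h - a - 1, 0] = ![s 0 - s 1 + (h - a - 1), s 1] := by
      ext i; fin_cases i <;>
        simp only [Fin.zero_eta, Fin.mk_one, Pi.add_apply, cons_mulVec, empty_mulVec, dotProduct,
          Fin.sum_univ_two, cons_val_zero, cons_val_one, cons_val_fin_one] <;> ring
    rw [hmap, Fin.forall_fin_two]
    simpa using (hS s hs).shear_mem_of_ne ha1 ha2 hb1 hb2 hab (vec_ne (hSv s hs))
  · refine ⟨!![1, 0; -1, 1], ![0, h - b - 1], Or.inl (by simp [det_fin_two]),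
      fun s hs => ?_⟩
    have hmap : !![1, 0; -1, 1] *ᵥ s + ![0, h - b - 1] = ![s 0, s 1 - s 0 + (h - b - 1)] := by
      ext i; fin_cases i <;>
        simp only [Fin.zero_eta, Fin.mk_one, Pi.add_apply, cons_mulVec, empty_mulVec, dotProduct,
          Fin.sum_univ_two, cons_val_zero, cons_val_one, cons_val_fin_one] <;> ring
    rw [hmap, Fin.forall_fin_two]
    simpa [and_comm] using (inTriangle_comm.mp (hS s hs)).shear_mem_of_ne hb1 hb2 ha1 ha2
      (by omega) fun h' => vec_ne (hSv s hs) h'.symm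

lemma inTriangle_of_mem_triangle (ha1 : 1 ≤ a) (ha2 : a ≤ h - 1) (hb1 : 1 ≤ b)
    (hb2 : b ≤ h - 1) {s : Fin 2 → ℤ} (hs : (fun i => (s i : ℝ)) ∈ triangle h a b) :
    InTriangle h a b (s 0) (s 1) := by
  have ha1' : (1 : ℝ) ≤ a := by exact_mod_cast ha1
  have ha2' : (a : ℝ) ≤ h - 1 := by exact_mod_cast ha2
  have hb1' : (1 : ℝ) ≤ b := by exact_mod_cast hb1
  have hb2' : (b : ℝ) ≤ h - 1 := by exact_mod_cast hb2
  have edge {c₀ c₁ r : ℝ} (hv₀ : 0 ≤ r) (hv₁ : c₀ * a + c₁ * h ≤ r) (hv₂ : c₀ * h + c₁ * b ≤ r) :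
      c₀ * s 0 + c₁ * s 1 ≤ r := by
    refine convexHull_subset_halfPlane ?_ hs
    simp only [mem_insert_iff, mem_singleton_iff, forall_eq_or_imp, forall_eq]
    simpa using ⟨hv₀, hv₁, hv₂⟩
  refine ⟨?_, ?_, ?_⟩
  · have := edge (c₀ := -h) (c₁ := a) le_rfl (by linarith) (by nlinarith)
    exact_mod_cast (by linarith : (a : ℝ) * s 1 ≤ h * s 0)
  · have := edge (c₀ := b) (c₁ := -h) le_rfl (by nlinarith) (by linarith)
    exact_mod_cast (by linarith : (b : ℝ) * s 0 ≤ h * s 1)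
  · have := edge (c₀ := h - b) (c₁ := h - a) (r := h ^ 2 - a * b) (by nlinarith) (by linarith)
      (by linarith)
    exact_mod_cast this

lemma mem_triangle_below_apex (ha1 : 1 ≤ a) (ha2 : a ≤ h - 1) (hb1 : 1 ≤ b)
    (hb2 : b ≤ h - 1) : ![(a : ℝ), h - 1] ∈ triangle h a b := by
  have ha1' : (1 : ℝ) ≤ a := by exact_mod_cast ha1
  have ha2' : (a : ℝ) ≤ h - 1 := by exact_mod_cast ha2
  have hb1' : (1 : ℝ) ≤ b := by exact_mod_cast hb1
  have hb2' : (b : ℝ) ≤ h - 1 := by exact_mod_cast hb2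
  set D : ℝ := h ^ 2 - a * b
  have hD : 0 < D := by nlinarith
  -- barycentric coordinates of `(a, h-1)` with respect to `(0,0)`, `(a,h)`, `(h,b)`
  set w : Fin 3 → ℝ := ![(h - a) / D, (h ^ 2 - h - a * b) / D, a / D]
  set z : Fin 3 → Fin 2 → ℝ := ![![0, 0], ![(a : ℝ), h], ![(h : ℝ), b]]
  have hsum : ∑ i, w i • z i = ![(a : ℝ), h - 1] := by
    ext j
    fin_cases j <;>
      simp only [w, z, Fin.zero_eta, Fin.mk_one, Finset.sum_apply, Pi.smul_apply, smul_eq_mul,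
        Fin.sum_univ_three, cons_val_zero, cons_val_one, cons_val_two, tail_cons, head_cons] <;>
      field_simp <;> ring
  rw [← hsum]
  refine (convex_convexHull ℝ _).sum_mem (fun i _ => ?_) ?_ (fun i _ => ?_)
  · fin_cases i <;> exact div_nonneg (by nlinarith) hD.le
  · rw [Fin.sum_univ_three]
    change (h - a) / D + (h ^ 2 - h - a * b) / D + a / D = (1 : ℝ)
    rw [← add_div, ← add_div, div_eq_one_iff_eq hD.ne']
    ring
  · fin_cases i <;> exact subset_convexHull ℝ _ (by simp [z])

lemma lsSquare_lt_of_ssubset_triangle (ha1 : 1 ≤ a) (ha2 : a ≤ h - 1) (hb1 : 1 ≤ b)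
    (hb2 : b ≤ h - 1) (hab : h ≤ a + b) {P : Set (Fin 2 → ℝ)} (hP : IsLatticePolygon P)
    (hPT : P ⊂ triangle h a b) : lsSquare P < h := by
  obtain ⟨S, -, rfl⟩ := hP
  have hvertex : ∃ v : Fin 2 → ℤ, (v = ![0, 0] ∨ v = ![a, h] ∨ v = ![h, b]) ∧ ∀ s ∈ S, s ≠ v := by
    by_contra! hall
    have hmem (x y : ℤ) (hxy : ![x, y] = ![0, 0] ∨ ![x, y] = ![a, h] ∨ ![x, y] = ![h, b]) :
        ![(x : ℝ), y] ∈ latticeHull S := by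
      obtain ⟨s, hs, rfl⟩ := hall _ hxy
      exact intCast_vecCons_two x y ▸ subset_convexHull ℝ _ ⟨_, hs, rfl⟩
    have hTP : triangle h a b ⊆ latticeHull S := by
      refine convexHull_min ?_ (convex_convexHull ℝ _)
      simp only [insert_subset_iff, singleton_subset_iff]
      exact ⟨by exact_mod_cast hmem 0 0 (by simp), hmem a h (by simp), hmem h b (by simp)⟩
    exact hPT.not_subset hTP
  obtain ⟨v, hv, hSv⟩ := hvertex
  have hS (s) (hs : s ∈ (S : Set (Fin 2 → ℤ))) : InTriangle h a b (s 0) (s 1) :=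
    inTriangle_of_mem_triangle ha1 ha2 hb1 hb2 (hPT.subset (subset_convexHull ℝ _ ⟨s, hs, rfl⟩))
  calc lsSquare (latticeHull S) ≤ (h - 1 : ℤ) := lsSquare_latticeHull_le (by omega)
        (fitsInSquare_of_forall_ne_vertex ha1 ha2 hb1 hb2 hab hS hv hSv)
    _ < h := by push_cast; linarith

end Triangle

section Cut

variable {h a b : ℤ}

lemma eq_zero_of_abs_edge_le {p q : ℤ} (ha : 0 ≤ a) (hb : 0 ≤ b) (hab : a + b < h)
    (h₁ : |p * h + q * b| ≤ h - 1) (h₂ : |p * (h - a) + q * (b - (h - 1))| ≤ h - 1) : p = 0 := by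
  rw [abs_le] at h₁ h₂
  have hha : 0 ≤ h - a := by omega
  have hhb : 0 ≤ h - 1 - b := by omega
  rcases lt_trichotomy p 0 with hp | hp | hp
  · have hq : 1 ≤ q := by nlinarith
    nlinarith [mul_nonneg (by omega : 0 ≤ -1 - p) hha, mul_nonneg (by omega : 0 ≤ q - 1) hhb]
  · exact hp
  · have hq : q ≤ -1 := by nlinarith
    nlinarith [mul_nonneg (by omega : 0 ≤ p - 1) hha, mul_nonneg (by omega : 0 ≤ -1 - q) hhb]

def cutTriangle (h a b : ℤ) : Finset (Fin 2 → ℤ) :=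
  {![0, 0], ![h, b], ![a, h - 1]}

lemma not_fitsInSquare_cutTriangle (ha1 : 1 ≤ a) (hb1 : 1 ≤ b) (hab : a + b < h) :
    ¬FitsInSquare (cutTriangle h a b) (h - 1) := by
  rintro ⟨A, t, hA, hfit⟩
  have hval (x y : ℤ) (i : Fin 2) : (A *ᵥ ![x, y] + t) i = A i 0 * x + A i 1 * y + t i := by
    fin_cases i <;> simp
  have hcol (i : Fin 2) : A i 0 = 0 := by
    obtain ⟨f₀, f₀'⟩ := hval 0 0 i ▸ hfit ![0, 0] (by simp [cutTriangle]) i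
    obtain ⟨f₁, f₁'⟩ := hval h b i ▸ hfit ![h, b] (by simp [cutTriangle]) i
    obtain ⟨f₂, f₂'⟩ := hval a (h - 1) i ▸ hfit ![a, h - 1] (by simp [cutTriangle]) i
    exact eq_zero_of_abs_edge_le (q := A i 1) (by omega) (by omega) hab
      (abs_le.mpr ⟨by linarith, by linarith⟩) (abs_le.mpr ⟨by linarith, by linarith⟩)
  rw [det_fin_two, hcol 0, hcol 1] at hA
  norm_num at hA

lemma le_lsSquare_cutTriangle (ha1 : 1 ≤ a) (hb1 : 1 ≤ b) (hab : a + b < h) :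
    (h : ℝ) ≤ lsSquare (latticeHull (cutTriangle h a b)) := by
  refine le_lsSquare_latticeHull (by omega) ⟨1, 0, Or.inl det_one, ?_⟩
    (not_fitsInSquare_cutTriangle ha1 hb1 hab)
  simp only [cutTriangle, Finset.coe_insert, Finset.coe_singleton, forall_mem_insert,
    mem_singleton_iff, forall_eq, one_mulVec, add_zero, Fin.forall_fin_two, cons_val_zero, cons_val_one, mem_Icc]
  omega

lemma latticeHull_cutTriangle_ssubset (ha1 : 1 ≤ a) (ha2 : a ≤ h - 1) (hb1 : 1 ≤ b)
    (hb2 : b ≤ h - 1) : latticeHull (cutTriangle h a b) ⊂ triangle h a b := by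
  have hcut {s : Fin 2 → ℤ} (hs : s ∈ (cutTriangle h a b : Set (Fin 2 → ℤ))) :
      s = ![0, 0] ∨ s = ![h, b] ∨ s = ![a, h - 1] := by
    simpa [cutTriangle] using hs
  refine ssubset_of_subset_not_subset ?_ fun hsub => ?_
  · refine convexHull_min ?_ (convex_convexHull ℝ _)
    rintro _ ⟨s, hs, rfl⟩
    rcases hcut hs with rfl | rfl | rfl <;> simp only [intCast_vecCons_two]
    · exact subset_convexHull ℝ _ (by simp)
    · exact subset_convexHull ℝ _ (by simp)
    · push_cast
      exact mem_triangle_below_apex ha1 ha2 hb1 hb2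
  · have hapex := hsub (subset_convexHull ℝ _ (by simp) : ![(a : ℝ), h] ∈ triangle h a b)
    have hle := convexHull_subset_halfPlane (c₀ := 0) (c₁ := 1) (r := h - 1) ?_ hapex
    · norm_num at hle
    · rintro _ ⟨s, hs, rfl⟩
      rcases hcut hs with rfl | rfl | rfl <;>
        simp only [cons_val_zero, cons_val_one, zero_mul, one_mul, zero_add] <;>
        exact_mod_cast (by omega)

end Cut

theorem stmt13_general (h a b : ℤ)
    (ha1 : 1 ≤ a) (ha2 : a ≤ h - 1) (hb1 : 1 ≤ b) (hb2 : b ≤ h - 1)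
    (T : Set (Fin 2 → ℝ))
    (hT : T = convexHull ℝ
      {(![0, 0] : Fin 2 → ℝ), ![(a : ℝ), (h : ℝ)], ![(h : ℝ), (b : ℝ)]}) :
    (∀ P' : Set (Fin 2 → ℝ), IsLatticePolygon P' → P' ⊂ T → lsSquare P' < (h : ℝ)) ↔
      h ≤ a + b := by
  subst hT
  constructor
  · intro hmin
    by_contra! hab
    exact (hmin _ ⟨_, ⟨![0, 0], by simp [cutTriangle]⟩, rfl⟩
      (latticeHull_cutTriangle_ssubset ha1 ha2 hb1 hb2)).not_ge
      (le_lsSquare_cutTriangle ha1 hb1 hab)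
  · exact fun hab P hP hPT => lsSquare_lt_of_ssubset_triangle ha1 ha2 hb1 hb2 hab hP hPT

/-- For integers `1 ≤ a, b ≤ h-1`, the lattice triangle `T = conv{(0,0),(a,h),(h,b)}`
(which has `ls_□(T) = h`) is minimal iff `a + b ≥ h`. -/
theorem stmt13 (h a b : ℤ) (hh : 0 < h)
    (ha1 : 1 ≤ a) (ha2 : a ≤ h - 1) (hb1 : 1 ≤ b) (hb2 : b ≤ h - 1)
    (T : Set (Fin 2 → ℝ))
    (hT : T = convexHull ℝ
      {(![0, 0] : Fin 2 → ℝ), ![(a : ℝ), (h : ℝ)], ![(h : ℝ), (b : ℝ)]})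
    (hls : lsSquare T = (h : ℝ)) :
    (∀ P' : Set (Fin 2 → ℝ), IsLatticePolygon P' → P' ⊂ T → lsSquare P' < (h : ℝ)) ↔
      h ≤ a + b :=
  stmt13_general h a b ha1 ha2 hb1 hb2 T hT
end

section
/- Let P ⊂ ℝ² be a plane convex body with respect to which the standard basis is reduced, i.e., w = w_{(1,0)}(P) ≤ h = w_{(0,1)}(P) and w_{(1,1)}(P) ≥ h, w_{(1,-1)}(P) ≥ h. Let P′ be the image of P under the linear map (x,y) ↦ (x, (w/h)·y). Then w_{(1,0)}(P′) = w_{(0,1)}(P′) = w and w_{(1,1)}(P′) ≥ w, w_{(1,-1)}(P′) ≥ w; in particular the standard basis is reduced with respect to P′. -/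
open Set MeasureTheory Pointwise

/-!
Widths behave like a seminorm on directions: `width P (t • u) = |t| * width P u` and
`width P (u + v) ≤ width P u + width P v`. Scaling the second coordinate by `c = w / h`
turns the width of `P'` in direction `(a, b)` into the width of `P` in direction `(a, c b)`.
Hence `P'` has widths `w` and `c h = w` in the coordinate directions, and moving from
`(1, ±1)` to `(1, ±c)` costs at most `(1 - c) h`, so `w_{(1,±c)}(P) ≥ h - (1 - c) h = w`.
-/

section Width

variable {P : Set (Fin 2 → ℝ)}

lemma width_nonneg (hP : IsCompact P) (u : Fin 2 → ℝ) : 0 ≤ width P u := by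
  rcases P.eq_empty_or_nonempty with rfl | hne
  · simp [width]
  have hK := hP.image (f := fun p => u 0 * p 0 + u 1 * p 1) (by fun_prop)
  exact sub_nonneg.2 (csInf_le_csSup (hne.image _) hK.bddBelow hK.bddAbove)

lemma width_smul (P : Set (Fin 2 → ℝ)) (t : ℝ) (u : Fin 2 → ℝ) :
    width P (t • u) = |t| * width P u := by
  have himage : (fun p => (t • u) 0 * p 0 + (t • u) 1 * p 1) '' P =
      t • (fun p => u 0 * p 0 + u 1 * p 1) '' P := by
    rw [← Set.image_smul, Set.image_image]
    refine Set.image_congr fun p _ => ?_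
    simp only [Pi.smul_apply, smul_eq_mul]
    ring
  rw [width, width, himage]
  rcases le_total 0 t with ht | ht
  · rw [Real.sSup_smul_of_nonneg ht, Real.sInf_smul_of_nonneg ht, abs_of_nonneg ht,
      smul_eq_mul, smul_eq_mul, mul_sub]
  · rw [Real.sSup_smul_of_nonpos ht, Real.sInf_smul_of_nonpos ht, abs_of_nonpos ht,
      smul_eq_mul, smul_eq_mul]
    ring

lemma width_add_le (hP : IsCompact P) (u v : Fin 2 → ℝ) :
    width P (u + v) ≤ width P u + width P v := by
  rcases P.eq_empty_or_nonempty with rfl | hne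
  · simp [width]
  have hu := hP.image (f := fun p => u 0 * p 0 + u 1 * p 1) (by fun_prop)
  have hv := hP.image (f := fun p => v 0 * p 0 + v 1 * p 1) (by fun_prop)
  have hsup : sSup ((fun p => (u + v) 0 * p 0 + (u + v) 1 * p 1) '' P) ≤
      sSup ((fun p => u 0 * p 0 + u 1 * p 1) '' P) +
        sSup ((fun p => v 0 * p 0 + v 1 * p 1) '' P) := by
    refine csSup_le (hne.image _) ?_
    rintro _ ⟨p, hp, rfl⟩
    have := add_le_add (le_csSup hu.bddAbove ⟨p, hp, rfl⟩) (le_csSup hv.bddAbove ⟨p, hp, rfl⟩)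
    simp only [Pi.add_apply] at this ⊢
    linarith
  have hinf : sInf ((fun p => u 0 * p 0 + u 1 * p 1) '' P) +
      sInf ((fun p => v 0 * p 0 + v 1 * p 1) '' P) ≤
        sInf ((fun p => (u + v) 0 * p 0 + (u + v) 1 * p 1) '' P) := by
    refine le_csInf (hne.image _) ?_
    rintro _ ⟨p, hp, rfl⟩
    have := add_le_add (csInf_le hu.bddBelow ⟨p, hp, rfl⟩) (csInf_le hv.bddBelow ⟨p, hp, rfl⟩)
    simp only [Pi.add_apply] at this ⊢
    linarith
  rw [width, width, width]
  linarith

lemma width_le_width_add_abs_sub_mul (hP : IsCompact P) (a b b' : ℝ) :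
    width P ![a, b'] ≤ width P ![a, b] + |b' - b| * width P ![0, 1] := by
  have hsplit : ![a, b'] = ![a, b] + (b' - b) • ![0, 1] := by
    ext i; fin_cases i <;> simp
  calc width P ![a, b'] ≤ width P ![a, b] + width P ((b' - b) • ![0, 1]) :=
        hsplit ▸ width_add_le hP _ _
    _ = width P ![a, b] + |b' - b| * width P ![0, 1] := by rw [width_smul]

lemma width_image_scale_snd (P : Set (Fin 2 → ℝ)) (c : ℝ) (u : Fin 2 → ℝ) :
    width ((fun p : Fin 2 → ℝ => ![p 0, c * p 1]) '' P) u = width P ![u 0, u 1 * c] := by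
  have himage : (fun p => u 0 * p 0 + u 1 * p 1) '' ((fun p => ![p 0, c * p 1]) '' P) =
      (fun p => (![u 0, u 1 * c] : Fin 2 → ℝ) 0 * p 0 + ![u 0, u 1 * c] 1 * p 1) '' P := by
    rw [Set.image_image]
    refine Set.image_congr fun p _ => ?_
    simp only [Matrix.cons_val_zero, Matrix.cons_val_one]
    ring
  rw [width, width, himage]

end Width

/-- If the standard basis is reduced with respect to a plane convex body `P` with
`w = w_{(1,0)}(P) ≤ h = w_{(0,1)}(P)`, then the standard basis is reduced with respect to
the image `P'` of `P` under `(x,y) ↦ (x, (w/h)·y)`, and `P'` has widths `w` in both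
coordinate directions and widths at least `w` in the directions `(1,±1)`. -/
theorem stmt18 (P : Set (Fin 2 → ℝ)) (hP : IsPlaneConvexBody P) (w h : ℝ)
    (hw : width P ![1, 0] = w) (hh : width P ![0, 1] = h) (hwh : w ≤ h)
    (h11 : (h : ℝ) ≤ width P ![1, 1]) (h1m1 : (h : ℝ) ≤ width P ![1, -1]) :
    width ((fun p : Fin 2 → ℝ => ![p 0, w / h * p 1]) '' P) ![1, 0] = w ∧
    width ((fun p : Fin 2 → ℝ => ![p 0, w / h * p 1]) '' P) ![0, 1] = w ∧
    w ≤ width ((fun p : Fin 2 → ℝ => ![p 0, w / h * p 1]) '' P) ![1, 1] ∧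
    w ≤ width ((fun p : Fin 2 → ℝ => ![p 0, w / h * p 1]) '' P) ![1, -1] := by
  have hK : IsCompact P := hP.1
  set c := w / h
  have hw0 : 0 ≤ w := hw ▸ width_nonneg hK _
  have hc0 : 0 ≤ c := div_nonneg hw0 (hw0.trans hwh)
  have hc1 : 0 ≤ 1 - c := sub_nonneg.2 (div_le_one_of_le₀ hwh (hw0.trans hwh))
  -- when `h = 0` the junk value `w / 0 = 0` is harmless, as then also `w = 0`
  have hch : c * h = w := div_mul_cancel_of_imp fun h0 => le_antisymm (h0 ▸ hwh) hw0
  have hvert : width P ![0, c] = w := by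
    rw [show ![0, c] = c • ![0, 1] by simp, width_smul, abs_of_nonneg hc0, hh, hch]
  have hplus : w ≤ width P ![1, c] := by
    have := width_le_width_add_abs_sub_mul hK 1 c 1
    rw [abs_of_nonneg hc1, hh] at this
    linarith
  have hminus : w ≤ width P ![1, -c] := by
    have := width_le_width_add_abs_sub_mul hK 1 (-c) (-1)
    rw [show -1 - -c = -(1 - c) by ring, abs_neg, abs_of_nonneg hc1, hh] at this
    linarith
  simp only [width_image_scale_snd, Matrix.cons_val_zero, Matrix.cons_val_one, zero_mul,
    one_mul, neg_one_mul]
  exact ⟨hw, hvert, hplus, hminus⟩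
end
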